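/- Let a ≥ b ≥ 0 be integers and define the two-variable bialternant Schur function S(x,y) := (x^{a+1} y^b − y^{a+1} x^b)/(x−y) for distinct x, y in ℚ(q,t). Then ( S(1,t) − S(1,q) ) / (t−q) = Σ_{p=b}^{a} [p]_{q,t} in ℚ(q,t). In particular this element is a polynomial in q, t with nonnegative integer coefficients. (This is the coefficient ⟨Δ_{e_1} e_n, s_λ⟩ for the partition λ with conjugate λ' = (a,b).) -/
import Mathlib


open MvPolynomial

noncomputable section

abbrev QT : Type := FractionRing (MvPolynomial (Fin 2) ℚ)

def q : QT := algebraMap (MvPolynomial (Fin 2) ℚ) QT (X 0)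
def t : QT := algebraMap (MvPolynomial (Fin 2) ℚ) QT (X 1)

/-- The `q,t`-analogue `[m]_{q,t} = ∑_{r=0}^{m-1} q^(m-1-r) t^r`. -/
def qtn (m : ℕ) : QT := ∑ r ∈ Finset.range m, q ^ (m - 1 - r) * t ^ r

/-- The two-variable bialternant Schur function of shape `(a,b)`. -/
def S (a b : ℕ) (x y : QT) : QT := (x ^ (a + 1) * y ^ b - y ^ (a + 1) * x ^ b) / (x - y)

/-- The canonical embedding `ℤ[q,t] → ℚ(q,t)`. -/
def emb : MvPolynomial (Fin 2) ℤ →+* QT :=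
  (algebraMap (MvPolynomial (Fin 2) ℚ) QT).comp
    (MvPolynomial.map (Int.castRingHom ℚ))

lemma alg_inj : Function.Injective (algebraMap (MvPolynomial (Fin 2) ℚ) QT) :=
  IsFractionRing.injective _ _

lemma ne_of_eval (p p' : MvPolynomial (Fin 2) ℚ) (f : Fin 2 → ℚ)
    (h : eval f p ≠ eval f p') :
    algebraMap (MvPolynomial (Fin 2) ℚ) QT p ≠ algebraMap (MvPolynomial (Fin 2) ℚ) QT p' :=
  fun he => h (by rw [alg_inj he])

lemma t_ne_one : t ≠ 1 := by
  have : t ≠ algebraMap (MvPolynomial (Fin 2) ℚ) QT 1 :=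
    ne_of_eval (X 1) 1 (fun _ => 0) (by simp)
  simpa using this

lemma q_ne_one : q ≠ 1 := by
  have : q ≠ algebraMap (MvPolynomial (Fin 2) ℚ) QT 1 :=
    ne_of_eval (X 0) 1 (fun _ => 0) (by simp)
  simpa using this

lemma t_ne_q : t ≠ q :=
  ne_of_eval (X 1) (X 0) (fun i => if i = 0 then 1 else 0) (by simp)

lemma qtn_mul (m : ℕ) : qtn m * (t - q) = t ^ m - q ^ m := by
  rw [← geom_sum₂_mul t q m]
  unfold qtn
  congr 1
  exact Finset.sum_congr rfl (fun r _ => by ring)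

lemma S_eval (a b : ℕ) (hab : b ≤ a) (x : QT) (hx : x ≠ 1) :
    S a b 1 x = ∑ p ∈ Finset.Icc b a, x ^ p := by
  have h1 : (Finset.Icc b a) = Finset.Ico b (a + 1) := by
    ext x; simp
  rw [h1, geom_sum_Ico hx (by omega)]
  unfold S
  rw [one_pow, one_pow, one_mul, mul_one]
  rw [show (1 : QT) - x = -(x - 1) by ring, show x ^ b - x ^ (a+1) = -(x ^ (a+1) - x ^ b) by ring,
    neg_div_neg_eq]

theorem stmt13 (a b : ℕ) (hab : b ≤ a) :
    (S a b 1 t - S a b 1 q) / (t - q) = ∑ p ∈ Finset.Icc b a, qtn p ∧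
    ∃ P : MvPolynomial (Fin 2) ℤ,
      (∀ m : Fin 2 →₀ ℕ, 0 ≤ P.coeff m) ∧
      emb P = (S a b 1 t - S a b 1 q) / (t - q) := by
  have htq : t - q ≠ 0 := sub_ne_zero.mpr t_ne_q
  have key : (S a b 1 t - S a b 1 q) / (t - q) = ∑ p ∈ Finset.Icc b a, qtn p := by
    rw [S_eval a b hab t t_ne_one, S_eval a b hab q q_ne_one]
    rw [div_eq_iff htq, Finset.sum_mul, ← Finset.sum_sub_distrib]
    exact Finset.sum_congr rfl (fun p _ => (qtn_mul p).symm)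
  refine ⟨key, ?_⟩
  refine ⟨∑ p ∈ Finset.Icc b a, ∑ r ∈ Finset.range p, X 0 ^ (p - 1 - r) * X 1 ^ r, ?_, ?_⟩
  · intro m
    rw [MvPolynomial.coeff_sum]
    refine Finset.sum_nonneg (fun p _ => ?_)
    rw [MvPolynomial.coeff_sum]
    refine Finset.sum_nonneg (fun r _ => ?_)
    simp only [X_pow_eq_monomial, monomial_mul, coeff_monomial, one_mul]
    split <;> norm_num
  · rw [key]
    rw [map_sum]
    refine Finset.sum_congr rfl (fun p _ => ?_)
    rw [map_sum]
    unfold qtn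
    refine Finset.sum_congr rfl (fun r _ => ?_)
    rw [map_mul, map_pow, map_pow]
    have hq : emb (X 0) = q := by simp [emb, q]
    have ht : emb (X 1) = t := by simp [emb, t]
    rw [hq, ht]

end
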